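/- arXiv:2002.00859 — 4 statements merged into one kernel-verified Lean document; each statement's English description precedes it below -/
import Mathlib

section
/- For p ≥ 1, the p-Wasserstein distance between two Borel probability measures μ, ν on ℝ with finite p-th moments equals the Lᵖ((0,1)) distance of their quantile functions: d_{W_p}(μ,ν) = (∫₀¹ |F_μ⁻¹(t) − F_ν⁻¹(t)|ᵖ dt)^{1/p}. -/
/-!
For `t ∈ (0,1)` one has `F_μ⁻¹(t) < v ↔ t < μ (-∞, v)`. Hence, under Lebesgue measure on
`(0,1)`, the pair `(F_μ⁻¹, F_ν⁻¹)` is a coupling `σ` of `μ` and `ν` with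
`σ ((-∞, u) × [v, ∞)) = (μ (-∞, u) - ν (-∞, v))₊`, and by the Fréchet–Hoeffding bound no coupling
gives such a rectangle less mass. The hinge cost `(y - x - s)₊` is the Lebesgue measure of
`{u | x < u, u + s ≤ y}`, so by Tonelli its expectation is an integral of rectangle masses and `σ`
minimises it. Finally `|x - y| ^ p` is a mixture over `s ≥ 0` of the costs `(|x - y| - s)₊`
(a Dirac mass at `0` for `p = 1`, the density `p (p - 1) s ^ (p - 2)` for `p > 1`), so `σ` is an
optimal coupling, and its cost is the `Lᵖ` distance of the quantile functions.
-/

open MeasureTheory Set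

noncomputable section

/-- Cumulative distribution function `F_μ(x) = μ((-∞,x])`. -/
def cdfR (μ : Measure ℝ) (x : ℝ) : ℝ := (μ (Set.Iic x)).toReal

/-- Quantile function `F_μ⁻¹(t) = sup {x | F_μ(x) ≤ t}`. -/
def quantR (μ : Measure ℝ) (t : ℝ) : ℝ := sSup {x : ℝ | cdfR μ x ≤ t}

open Filter Topology ProbabilityTheory
open scoped ENNReal

namespace MeasureTheory

lemma Measure.ext_of_Iio_of_isProbabilityMeasure {α : Type*} [TopologicalSpace α]
    [MeasurableSpace α] [SecondCountableTopology α] [LinearOrder α] [OrderTopology α]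
    [BorelSpace α] {μ ν : Measure α} [IsProbabilityMeasure μ] [IsProbabilityMeasure ν]
    (h : ∀ a, μ (Iio a) = ν (Iio a)) : μ = ν :=
  Measure.ext_of_Ici μ ν fun a => by
    rw [← compl_Iio, prob_compl_eq_one_sub measurableSet_Iio,
      prob_compl_eq_one_sub measurableSet_Iio, h]

lemma measure_map_fst_sub_measure_map_snd_le {α β : Type*} [MeasurableSpace α]
    [MeasurableSpace β] (π : Measure (α × β)) {s : Set α} {t : Set β} (hs : MeasurableSet s)
    (ht : MeasurableSet t) : π.map Prod.fst s - π.map Prod.snd t ≤ π (s ×ˢ tᶜ) := by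
  rw [Measure.map_apply measurable_fst hs, Measure.map_apply measurable_snd ht, tsub_le_iff_right]
  calc π (Prod.fst ⁻¹' s) ≤ π (s ×ˢ tᶜ ∪ Prod.snd ⁻¹' t) :=
        measure_mono fun q hq => or_iff_not_imp_right.2 fun hqt => ⟨hq, hqt⟩
    _ ≤ π (s ×ˢ tᶜ) + π (Prod.snd ⁻¹' t) := measure_union_le _ _

lemma exists_lt_measureReal_Iic_of_lt_measureReal_Iio {μ : Measure ℝ} [IsFiniteMeasure μ]
    {t v : ℝ} (h : t < μ.real (Iio v)) : ∃ w < v, t < μ.real (Iic w) := by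
  obtain ⟨w, hw_mono, hw_lt, hw_lim⟩ := exists_seq_strictMono_tendsto v
  have hIio : ⋃ n, Iic (w n) = Iio v := iUnion_Iic_eq_Iio_of_lt_of_tendsto hw_lt hw_lim
  have hlim : Tendsto (fun n => μ.real (Iic (w n))) atTop (𝓝 (μ.real (Iio v))) := by
    rw [← hIio]
    exact (ENNReal.tendsto_toReal (measure_ne_top μ _)).comp
      (tendsto_measure_iUnion_atTop fun m n hmn => Iic_subset_Iic.2 (hw_mono.monotone hmn))
  obtain ⟨n, hn⟩ := (hlim.eventually_const_lt h).exists
  exact ⟨w n, hw_lt n, hn⟩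

lemma integrable_rpow_abs_sub {p : ℝ} (hp : 0 < p) {π : Measure (ℝ × ℝ)}
    (h₁ : Integrable (fun x => |x| ^ p) (π.map Prod.fst))
    (h₂ : Integrable (fun x => |x| ^ p) (π.map Prod.snd)) :
    Integrable (fun q : ℝ × ℝ => |q.1 - q.2| ^ p) π := by
  have hp₀ : ENNReal.ofReal p ≠ 0 := ENNReal.ofReal_ne_zero_iff.2 hp
  have hmemLp {f : ℝ × ℝ → ℝ} (hf : Measurable f) (h : Integrable (fun x => |x| ^ p) (π.map f)) :
      MemLp f (ENNReal.ofReal p) π := by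
    rw [← Function.id_comp f, ← memLp_map_measure_iff aestronglyMeasurable_id hf.aemeasurable,
      ← integrable_norm_rpow_iff aestronglyMeasurable_id hp₀ ENNReal.ofReal_ne_top,
      ENNReal.toReal_ofReal hp.le]
    simpa using h
  simpa [ENNReal.toReal_ofReal hp.le] using
    ((hmemLp measurable_fst h₁).sub (hmemLp measurable_snd h₂)).integrable_norm_rpow hp₀
      ENNReal.ofReal_ne_top

instance : IsProbabilityMeasure (volume.restrict (Ioo (0 : ℝ) 1)) :=
  ⟨by simp⟩

end MeasureTheory

lemma integral_taylor_remainder_rpow {p L : ℝ} (hp : 1 < p) (hL : 0 ≤ L) :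
    ∫ s in 0..L, p * (p - 1) * (L * s ^ (p - 2) - s ^ (p - 1)) = L ^ p := by
  have hi₁ : IntervalIntegrable (fun s : ℝ => s ^ (p - 2)) volume 0 L :=
    intervalIntegral.intervalIntegrable_rpow' (by linarith)
  have hi₂ : IntervalIntegrable (fun s : ℝ => s ^ (p - 1)) volume 0 L :=
    intervalIntegral.intervalIntegrable_rpow' (by linarith)
  have hLp : L * L ^ (p - 1) = L ^ p := by
    rw [mul_comm, ← Real.rpow_add_one' hL (by linarith), sub_add_cancel]
  rw [intervalIntegral.integral_const_mul, intervalIntegral.integral_sub (hi₁.const_mul L) hi₂,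
    intervalIntegral.integral_const_mul, integral_rpow (Or.inl (by linarith)),
    integral_rpow (Or.inl (by linarith)), sub_add_cancel, show p - 2 + 1 = p - 1 by ring,
    Real.zero_rpow (by linarith), Real.zero_rpow (by linarith), sub_zero, sub_zero,
    mul_div_assoc', hLp]
  have hp₀ : p ≠ 0 := by linarith
  have hp₁ : p - 1 ≠ 0 := by linarith
  field_simp
  ring

lemma lintegral_ofReal_sub_withDensity_rpow {p L : ℝ} (hp : 1 < p) (hL : 0 ≤ L) :
    ∫⁻ s, ENNReal.ofReal (L - s) ∂(volume.restrict (Ioi 0)).withDensity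
      (fun s => ENNReal.ofReal (p * (p - 1) * s ^ (p - 2))) = ENNReal.ofReal (L ^ p) := by
  set g : ℝ → ℝ := fun s => p * (p - 1) * (L * s ^ (p - 2) - s ^ (p - 1))
  have hg (s : ℝ) (hs : 0 < s) : p * (p - 1) * s ^ (p - 2) * (L - s) = g s := by
    simp only [g, show s ^ (p - 1) = s ^ (p - 2) * s by rw [← Real.rpow_add_one hs.ne']; ring_nf]
    ring
  have hdensity_nonneg (s : ℝ) (hs : 0 < s) : 0 ≤ p * (p - 1) * s ^ (p - 2) := by
    have := Real.rpow_nonneg hs.le (p - 2)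
    have : 0 ≤ p - 1 := by linarith
    positivity
  have hg_int : IntegrableOn g (Ioc 0 L) :=
    (intervalIntegrable_iff_integrableOn_Ioc_of_le hL).1
      ((((intervalIntegral.intervalIntegrable_rpow' (by linarith)).const_mul L).sub
        (intervalIntegral.intervalIntegrable_rpow' (by linarith))).const_mul _)
  have hg_nonneg : 0 ≤ᵐ[volume.restrict (Ioc 0 L)] g := by
    filter_upwards [self_mem_ae_restrict measurableSet_Ioc] with s hs
    rw [Pi.zero_apply, ← hg s hs.1]
    exact mul_nonneg (hdensity_nonneg s hs.1) (sub_nonneg.2 hs.2)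
  have hhead : ∫⁻ s in Ioc 0 L, ENNReal.ofReal (p * (p - 1) * s ^ (p - 2)) * ENNReal.ofReal (L - s)
      = ENNReal.ofReal (L ^ p) := by
    rw [setLIntegral_congr_fun measurableSet_Ioc fun s hs => by
      rw [← ENNReal.ofReal_mul (hdensity_nonneg s hs.1), hg s hs.1],
      ← ofReal_integral_eq_lintegral_ofReal hg_int hg_nonneg,
      ← intervalIntegral.integral_of_le hL, integral_taylor_remainder_rpow hp hL]
  have htail : ∫⁻ s in Ioi L, ENNReal.ofReal (p * (p - 1) * s ^ (p - 2)) * ENNReal.ofReal (L - s)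
      = 0 := by
    rw [setLIntegral_congr_fun measurableSet_Ioi fun s hs => by
      rw [ENNReal.ofReal_of_nonpos (sub_nonpos.2 (le_of_lt hs)), mul_zero], lintegral_zero]
  rw [lintegral_withDensity_eq_lintegral_mul _ (by fun_prop) (by fun_prop),
    ← Ioc_union_Ioi_eq_Ioi hL, lintegral_union measurableSet_Ioi Ioc_disjoint_Ioi_same]
  simp only [Pi.mul_apply, hhead, htail, add_zero]

lemma exists_measure_lintegral_ofReal_sub_eq_rpow {p : ℝ} (hp : 1 ≤ p) :
    ∃ ρ : Measure ℝ, SFinite ρ ∧ (∀ᵐ s ∂ρ, 0 ≤ s) ∧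
      ∀ L, 0 ≤ L → ∫⁻ s, ENNReal.ofReal (L - s) ∂ρ = ENNReal.ofReal (L ^ p) := by
  rcases hp.eq_or_lt with rfl | hp
  · refine ⟨Measure.dirac 0, inferInstance, ae_dirac_iff measurableSet_Ici |>.2 le_rfl, ?_⟩
    intro L _
    rw [lintegral_dirac, sub_zero, Real.rpow_one]
  · refine ⟨(volume.restrict (Ioi 0)).withDensity
      (fun s => ENNReal.ofReal (p * (p - 1) * s ^ (p - 2))), inferInstance, ?_,
      fun L hL => lintegral_ofReal_sub_withDensity_rpow hp hL⟩
    refine (withDensity_absolutelyContinuous _ _).ae_le ?_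
    filter_upwards [self_mem_ae_restrict measurableSet_Ioi] with s hs using le_of_lt hs

lemma ofReal_abs_sub_sub {s : ℝ} (hs : 0 ≤ s) (x y : ℝ) :
    ENNReal.ofReal (|x - y| - s) = ENNReal.ofReal (y - x - s) + ENNReal.ofReal (x - y - s) := by
  rcases le_total x y with h | h
  · rw [abs_of_nonpos (sub_nonpos.2 h), ENNReal.ofReal_of_nonpos (p := x - y - s) (by linarith),
      add_zero, neg_sub]
  · rw [abs_of_nonneg (sub_nonneg.2 h), ENNReal.ofReal_of_nonpos (p := y - x - s) (by linarith),
      zero_add]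

lemma lintegral_ofReal_sub_sub_eq (π : Measure (ℝ × ℝ)) [SFinite π] (s : ℝ) :
    ∫⁻ q, ENNReal.ofReal (q.2 - q.1 - s) ∂π = ∫⁻ u, π (Iio u ×ˢ Ici (u + s)) := by
  set B := {z : (ℝ × ℝ) × ℝ | z.1 ∈ Iio z.2 ×ˢ Ici (z.2 + s)}
  have hB : MeasurableSet B :=
    (measurableSet_lt measurable_fst.fst measurable_snd).inter
      (measurableSet_le (measurable_snd.add_const s) measurable_fst.snd)
  have hslice (q : ℝ × ℝ) : ENNReal.ofReal (q.2 - q.1 - s) = volume (Prod.mk q ⁻¹' B) := by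
    have : Prod.mk q ⁻¹' B = Ioc q.1 (q.2 - s) := by
      ext u; simp [B, le_sub_iff_add_le]
    rw [this, Real.volume_Ioc, sub_right_comm]
  simp_rw [hslice, ← Measure.prod_apply hB, Measure.prod_apply_symm hB]
  rfl

section Quantile

variable {μ ν : Measure ℝ} [IsProbabilityMeasure μ] [IsProbabilityMeasure ν]

lemma quantR_lt_iff {t : ℝ} (ht : t ∈ Ioo 0 1) (v : ℝ) :
    quantR μ t < v ↔ t < μ.real (Iio v) := by
  set S := {x : ℝ | cdfR μ x ≤ t}
  constructor
  · intro hv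
    have hS : BddAbove S := by
      obtain ⟨x₀, hx₀⟩ := ((tendsto_cdf_atTop μ).eventually_const_lt ht.2).exists
      refine ⟨x₀, fun x hx => le_of_not_gt fun hlt => ?_⟩
      have : cdf μ x₀ ≤ cdfR μ x := by
        rw [cdf_eq_real]; exact measureReal_mono (Iic_subset_Iic.2 hlt.le)
      exact absurd hx (not_le.2 (hx₀.trans_le this))
    obtain ⟨w, hQw, hwv⟩ := exists_between hv
    have hw : w ∉ S := fun hwS => (le_csSup hS hwS).not_gt hQw
    exact (not_le.1 hw).trans_le (measureReal_mono (Iic_subset_Iio.2 hwv))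
  · intro hv
    obtain ⟨w, hwv, htw⟩ := exists_lt_measureReal_Iic_of_lt_measureReal_Iio hv
    have hS : S.Nonempty := by
      obtain ⟨x, hx⟩ := ((tendsto_cdf_atBot μ).eventually_lt_const ht.1).exists
      exact ⟨x, by rw [cdf_eq_real] at hx; exact hx.le⟩
    refine (csSup_le hS fun x hx => le_of_not_gt fun hwx => ?_).trans_lt hwv
    exact (not_le.2 (htw.trans_le (measureReal_mono (Iic_subset_Iic.2 hwx.le)))) hx

lemma monotoneOn_quantR : MonotoneOn (quantR μ) (Ioo 0 1) := by
  intro s hs t ht hst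
  by_contra! hlt
  have hs' := (quantR_lt_iff hs (quantR μ s)).not.1 (lt_irrefl _)
  exact hs' (hst.trans_lt ((quantR_lt_iff ht _).1 hlt))

lemma aemeasurable_quantR : AEMeasurable (quantR μ) (volume.restrict (Ioo 0 1)) :=
  aemeasurable_restrict_of_monotoneOn measurableSet_Ioo monotoneOn_quantR

lemma Ioo_inter_preimage_quantR_Iio (v : ℝ) :
    Ioo 0 1 ∩ quantR μ ⁻¹' Iio v = Ioo 0 (μ.real (Iio v)) := by
  ext t
  refine ⟨fun ⟨ht, hv⟩ => ⟨ht.1, (quantR_lt_iff ht v).1 hv⟩, fun ⟨h0, hv⟩ => ?_⟩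
  have ht : t ∈ Ioo 0 1 := ⟨h0, hv.trans_le measureReal_le_one⟩
  exact ⟨ht, (quantR_lt_iff ht v).2 hv⟩

lemma map_quantR : (volume.restrict (Ioo 0 1)).map (quantR μ) = μ := by
  have := Measure.isProbabilityMeasure_map (aemeasurable_quantR (μ := μ))
  refine Measure.ext_of_Iio_of_isProbabilityMeasure fun v => ?_
  rw [Measure.map_apply_of_aemeasurable aemeasurable_quantR measurableSet_Iio,
    Measure.restrict_apply' measurableSet_Ioo, inter_comm, Ioo_inter_preimage_quantR_Iio,
    Real.volume_Ioo, sub_zero, ofReal_measureReal]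

def comonotoneCoupling (μ ν : Measure ℝ) : Measure (ℝ × ℝ) :=
  (volume.restrict (Ioo 0 1)).map fun t => (quantR μ t, quantR ν t)

lemma aemeasurable_quantR_prod :
    AEMeasurable (fun t => (quantR μ t, quantR ν t)) (volume.restrict (Ioo 0 1)) :=
  aemeasurable_quantR.prodMk aemeasurable_quantR

instance : IsProbabilityMeasure (comonotoneCoupling μ ν) :=
  Measure.isProbabilityMeasure_map aemeasurable_quantR_prod

lemma comonotoneCoupling_map_fst : (comonotoneCoupling μ ν).map Prod.fst = μ := by
  rw [comonotoneCoupling, AEMeasurable.map_map_of_aemeasurable measurable_fst.aemeasurable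
    aemeasurable_quantR_prod]
  exact map_quantR

lemma comonotoneCoupling_map_snd : (comonotoneCoupling μ ν).map Prod.snd = ν := by
  rw [comonotoneCoupling, AEMeasurable.map_map_of_aemeasurable measurable_snd.aemeasurable
    aemeasurable_quantR_prod]
  exact map_quantR

lemma comonotoneCoupling_map_swap :
    (comonotoneCoupling μ ν).map Prod.swap = comonotoneCoupling ν μ := by
  rw [comonotoneCoupling, AEMeasurable.map_map_of_aemeasurable measurable_swap.aemeasurable
    aemeasurable_quantR_prod]
  rfl

lemma comonotoneCoupling_Iio_prod_Ici (u v : ℝ) :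
    comonotoneCoupling μ ν (Iio u ×ˢ Ici v) = μ (Iio u) - ν (Iio v) := by
  rw [comonotoneCoupling, Measure.map_apply_of_aemeasurable aemeasurable_quantR_prod
    (measurableSet_Iio.prod measurableSet_Ici), Measure.restrict_apply' measurableSet_Ioo,
    ← ofReal_measureReal (s := Iio u), ← ofReal_measureReal (s := Iio v),
    ← ENNReal.ofReal_sub _ measureReal_nonneg]
  set a := μ.real (Iio u)
  set b := ν.real (Iio v)
  have hsub : (fun t => (quantR μ t, quantR ν t)) ⁻¹' (Iio u ×ˢ Ici v) ∩ Ioo 0 1 ⊆ Ico b a :=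
    fun t ⟨⟨hu, hv⟩, ht⟩ =>
      ⟨not_lt.1 fun hb => not_le.2 ((quantR_lt_iff ht v).2 hb) hv, (quantR_lt_iff ht u).1 hu⟩
  have hsup : Ioo b a ⊆ (fun t => (quantR μ t, quantR ν t)) ⁻¹' (Iio u ×ˢ Ici v) ∩ Ioo 0 1 := by
    intro t ⟨hb, ha⟩
    have ht : t ∈ Ioo 0 1 := ⟨measureReal_nonneg.trans_lt hb, ha.trans_le measureReal_le_one⟩
    exact ⟨⟨(quantR_lt_iff ht u).2 ha, not_lt.1 fun hv => ((quantR_lt_iff ht v).1 hv).not_gt hb⟩,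
      ht⟩
  refine le_antisymm ?_ ?_
  · simpa using measure_mono (μ := volume) hsub
  · simpa using measure_mono (μ := volume) hsup

lemma lintegral_ofReal_sub_sub_comonotoneCoupling_le {π : Measure (ℝ × ℝ)} [SFinite π]
    (hπ₁ : π.map Prod.fst = μ) (hπ₂ : π.map Prod.snd = ν) (s : ℝ) :
    ∫⁻ q, ENNReal.ofReal (q.2 - q.1 - s) ∂comonotoneCoupling μ ν
      ≤ ∫⁻ q, ENNReal.ofReal (q.2 - q.1 - s) ∂π := by
  rw [lintegral_ofReal_sub_sub_eq, lintegral_ofReal_sub_sub_eq]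
  refine lintegral_mono fun u => ?_
  rw [comonotoneCoupling_Iio_prod_Ici, ← hπ₁, ← hπ₂, ← compl_Iio]
  exact measure_map_fst_sub_measure_map_snd_le π measurableSet_Iio measurableSet_Iio

lemma lintegral_ofReal_abs_sub_sub_comonotoneCoupling_le {π : Measure (ℝ × ℝ)} [SFinite π]
    (hπ₁ : π.map Prod.fst = μ) (hπ₂ : π.map Prod.snd = ν) {s : ℝ} (hs : 0 ≤ s) :
    ∫⁻ q, ENNReal.ofReal (|q.1 - q.2| - s) ∂comonotoneCoupling μ ν
      ≤ ∫⁻ q, ENNReal.ofReal (|q.1 - q.2| - s) ∂π := by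
  have hmeas : Measurable fun q : ℝ × ℝ => ENNReal.ofReal (q.2 - q.1 - s) := by fun_prop
  have hswap (ρ : Measure (ℝ × ℝ)) : ∫⁻ q, ENNReal.ofReal (q.1 - q.2 - s) ∂ρ
      = ∫⁻ q, ENNReal.ofReal (q.2 - q.1 - s) ∂ρ.map Prod.swap :=
    (lintegral_map hmeas measurable_swap).symm
  simp_rw [ofReal_abs_sub_sub hs, lintegral_add_left hmeas, hswap, comonotoneCoupling_map_swap]
  gcongr ?_ + ?_
  · exact lintegral_ofReal_sub_sub_comonotoneCoupling_le hπ₁ hπ₂ s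
  · exact lintegral_ofReal_sub_sub_comonotoneCoupling_le
      (by rw [← hπ₂]; exact Measure.fst_map_swap) (by rw [← hπ₁]; exact Measure.snd_map_swap) s

lemma lintegral_comp_abs_sub_comonotoneCoupling_le {c : ℝ → ℝ≥0∞} {ρ : Measure ℝ} [SFinite ρ]
    (hρ : ∀ᵐ s ∂ρ, 0 ≤ s) (hc : ∀ L, 0 ≤ L → ∫⁻ s, ENNReal.ofReal (L - s) ∂ρ = c L)
    {π : Measure (ℝ × ℝ)} [SFinite π] (hπ₁ : π.map Prod.fst = μ) (hπ₂ : π.map Prod.snd = ν) :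
    ∫⁻ q, c |q.1 - q.2| ∂comonotoneCoupling μ ν ≤ ∫⁻ q, c |q.1 - q.2| ∂π := by
  have hlayers (π' : Measure (ℝ × ℝ)) [SFinite π'] : ∫⁻ q, c |q.1 - q.2| ∂π'
      = ∫⁻ s, ∫⁻ q, ENNReal.ofReal (|q.1 - q.2| - s) ∂π' ∂ρ := by
    rw [← lintegral_lintegral_swap (by fun_prop)]
    exact lintegral_congr fun q => (hc _ (abs_nonneg _)).symm
  rw [hlayers, hlayers]
  exact lintegral_mono_ae (hρ.mono fun s hs =>
    lintegral_ofReal_abs_sub_sub_comonotoneCoupling_le hπ₁ hπ₂ hs)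

lemma lintegral_rpow_abs_sub_comonotoneCoupling_le {p : ℝ} (hp : 1 ≤ p) {π : Measure (ℝ × ℝ)}
    [SFinite π] (hπ₁ : π.map Prod.fst = μ) (hπ₂ : π.map Prod.snd = ν) :
    ∫⁻ q, ENNReal.ofReal (|q.1 - q.2| ^ p) ∂comonotoneCoupling μ ν
      ≤ ∫⁻ q, ENNReal.ofReal (|q.1 - q.2| ^ p) ∂π := by
  obtain ⟨ρ, _, hρ, hρ_layer⟩ := exists_measure_lintegral_ofReal_sub_eq_rpow hp
  exact lintegral_comp_abs_sub_comonotoneCoupling_le hρ hρ_layer hπ₁ hπ₂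

end Quantile

/-- The `p`-Wasserstein distance (the `p`-th root of the infimum of transport costs over
couplings) of two probability measures on `ℝ` with finite `p`-th moments equals the
`Lᵖ((0,1))` distance of their quantile functions. -/
theorem wasserstein_eq_quantile_Lp (p : ℝ) (hp : 1 ≤ p)
    (μ ν : Measure ℝ) [IsProbabilityMeasure μ] [IsProbabilityMeasure ν]
    (hμ : Integrable (fun x => |x| ^ p) μ) (hν : Integrable (fun x => |x| ^ p) ν) :
    (sInf {r : ℝ | ∃ π : Measure (ℝ × ℝ), IsProbabilityMeasure π ∧
        π.map Prod.fst = μ ∧ π.map Prod.snd = ν ∧ r = ∫ q, |q.1 - q.2| ^ p ∂π}) ^ (1 / p)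
      = (∫ t in (0:ℝ)..1, |quantR μ t - quantR ν t| ^ p) ^ (1 / p) := by
  have hcost_nonneg (q : ℝ × ℝ) : 0 ≤ |q.1 - q.2| ^ p := by positivity
  have hcost {π : Measure (ℝ × ℝ)} (hπ₁ : π.map Prod.fst = μ) (hπ₂ : π.map Prod.snd = ν) :
      ENNReal.ofReal (∫ q, |q.1 - q.2| ^ p ∂π) = ∫⁻ q, ENNReal.ofReal (|q.1 - q.2| ^ p) ∂π :=
    ofReal_integral_eq_lintegral_ofReal
      (integrable_rpow_abs_sub (by linarith) (hπ₁ ▸ hμ) (hπ₂ ▸ hν)) (.of_forall hcost_nonneg)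
  rw [IsLeast.csInf_eq (a := ∫ q, |q.1 - q.2| ^ p ∂comonotoneCoupling μ ν), comonotoneCoupling,
    integral_map aemeasurable_quantR_prod (by fun_prop (disch := linarith)),
    intervalIntegral.integral_of_le zero_le_one, integral_Ioc_eq_integral_Ioo]
  refine ⟨⟨_, inferInstance, comonotoneCoupling_map_fst, comonotoneCoupling_map_snd, rfl⟩, ?_⟩
  rintro _ ⟨π, _, hπ₁, hπ₂, rfl⟩
  rw [← ENNReal.ofReal_le_ofReal_iff (integral_nonneg hcost_nonneg),
    hcost comonotoneCoupling_map_fst comonotoneCoupling_map_snd, hcost hπ₁ hπ₂]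
  exact lintegral_rpow_abs_sub_comonotoneCoupling_le hp hπ₁ hπ₂
end
end

section
/- Fix t ∈ [0,1] and let S_t := {μ ∈ W₁([0,1]) : d_{W₁}(δ₀,μ) = t}. Then for all ρ, σ ∈ S_t one has d_{W₁}(ρ,σ) ≤ 2t(1−t), and equality holds if and only if {ρ,σ} = {(1−t)δ₀ + tδ₁, δ_t}. -/
/-!
Write `F`, `G` for the distribution functions of `ρ`, `σ` on `(0,1)`. Being in the slice `S_t`
means `∫ F = ∫ G = 1 - t`. For values in `[0,1]` one has `|F - G| ≤ F + G - 2FG`, and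
Chebyshev's integral inequality for the monotone pair `F, G` gives `∫ FG ≥ (∫ F)(∫ G) = (1-t)²`;
hence `d(ρ,σ) ≤ 2(1-t) - 2(1-t)² = 2t(1-t)`.

At equality both estimates are tight. Tightness of Chebyshev's inequality forces, for monotone
functions, one of `F`, `G` to be constant on `(0,1)`, necessarily equal to `1 - t`: that measure
is `(1-t)δ₀ + tδ₁`. Tightness of the pointwise bound then forces the other distribution function
to take only the values `0` and `1`, and with integral `1 - t` it must jump at `t`: that measure
is `δ_t`. For `t ∈ {0,1}` the slice is the single point `δ_t`.
-/

open MeasureTheory Set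

noncomputable section

/-- Cumulative distribution function of a measure on `[0,1]`: `F_μ(x) = μ([0,x])`. -/
def cdfI (μ : Measure ℝ) (x : ℝ) : ℝ := (μ (Set.Icc 0 x)).toReal

/-- The Wasserstein space `W₁([0,1])`, realized as the set of Borel probability
measures on `ℝ` concentrated on `[0,1]`. -/
def P01 : Set (Measure ℝ) := {μ | IsProbabilityMeasure μ ∧ μ (Set.Icc 0 1) = 1}

/-- Vallender's formula for the 1-Wasserstein distance on `[0,1]`. -/
def dW1I (μ ν : Measure ℝ) : ℝ := ∫ x in (0:ℝ)..1, |cdfI μ x - cdfI ν x|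

open Filter Topology ProbabilityTheory

private theorem sub_mul_sub_eq {α : Type*} (F G : α → ℝ) (p : α × α) :
    (F p.1 - F p.2) * (G p.1 - G p.2)
      = (F p.1 * G p.1 - F p.1 * G p.2) - (G p.1 * F p.2 - F p.2 * G p.2) := by
  ring

section Chebyshev

variable {α : Type*} [MeasurableSpace α] {μ : Measure α} [IsProbabilityMeasure μ] {F G : α → ℝ}

theorem integrable_sub_mul_sub_prod (hF : Integrable F μ) (hG : Integrable G μ)
    (hFG : Integrable (fun x => F x * G x) μ) :
    Integrable (fun p : α × α => (F p.1 - F p.2) * (G p.1 - G p.2)) (μ.prod μ) := by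
  simp_rw [sub_mul_sub_eq F G]
  exact ((hFG.comp_fst μ).sub (hF.mul_prod hG)).sub ((hG.mul_prod hF).sub (hFG.comp_snd μ))

theorem integral_sub_mul_sub_prod (hF : Integrable F μ) (hG : Integrable G μ)
    (hFG : Integrable (fun x => F x * G x) μ) :
    ∫ p, (F p.1 - F p.2) * (G p.1 - G p.2) ∂μ.prod μ
      = 2 * (∫ x, F x * G x ∂μ - (∫ x, F x ∂μ) * ∫ x, G x ∂μ) := by
  simp_rw [sub_mul_sub_eq F G]
  rw [integral_sub (by exact (hFG.comp_fst μ).sub (hF.mul_prod hG))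
      (by exact (hG.mul_prod hF).sub (hFG.comp_snd μ)),
    integral_sub (hFG.comp_fst μ) (hF.mul_prod hG), integral_sub (hG.mul_prod hF) (hFG.comp_snd μ),
    integral_fun_fst (fun x => F x * G x), integral_fun_snd (fun x => F x * G x),
    integral_prod_mul F G, integral_prod_mul G F]
  simp only [probReal_univ, one_smul]
  ring

theorem Monovary.integral_mul_integral_le_integral_mul (hm : Monovary F G) (hF : Integrable F μ)
    (hG : Integrable G μ) (hFG : Integrable (fun x => F x * G x) μ) :
    (∫ x, F x ∂μ) * ∫ x, G x ∂μ ≤ ∫ x, F x * G x ∂μ := by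
  have := integral_nonneg (μ := μ.prod μ) (f := fun p => (F p.1 - F p.2) * (G p.1 - G p.2))
    fun p => hm.sub_mul_sub_nonneg p.2 p.1
  rw [integral_sub_mul_sub_prod hF hG hFG] at this
  linarith

theorem Monovary.ae_sub_mul_sub_eq_zero (hm : Monovary F G) (hF : Integrable F μ)
    (hG : Integrable G μ) (hFG : Integrable (fun x => F x * G x) μ)
    (h : ∫ x, F x * G x ∂μ = (∫ x, F x ∂μ) * ∫ x, G x ∂μ) :
    ∀ᵐ p ∂μ.prod μ, (F p.1 - F p.2) * (G p.1 - G p.2) = 0 := by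
  have := integral_sub_mul_sub_prod hF hG hFG
  rw [h, sub_self, mul_zero] at this
  exact (integral_eq_zero_iff_of_nonneg (fun p : α × α => hm.sub_mul_sub_nonneg p.2 p.1)
    (integrable_sub_mul_sub_prod hF hG hFG)).1 this

end Chebyshev

theorem Monotone.eq_or_eq_of_ae_sub_mul_sub_eq_zero {α : Type*} [Preorder α] [MeasurableSpace α]
    {μ : Measure α} [SFinite μ] {F G : α → ℝ} (hF : Monotone F) (hG : Monotone G)
    (h : ∀ᵐ p ∂μ.prod μ, (F p.1 - F p.2) * (G p.1 - G p.2) = 0) {x y : α} (hxy : x ≤ y)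
    (hx : μ (Iic x) ≠ 0) (hy : μ (Ici y) ≠ 0) : F x = F y ∨ G x = G y := by
  by_contra! hne
  have hFxy : F x < F y := (hF hxy).lt_of_ne hne.1
  have hGxy : G x < G y := (hG hxy).lt_of_ne hne.2
  -- on the rectangle `Iic x ×ˢ Ici y` both factors are negative
  have hsub : Iic x ×ˢ Ici y ⊆ {p | ¬(F p.1 - F p.2) * (G p.1 - G p.2) = 0} := by
    rintro ⟨u, v⟩ ⟨hu, hv⟩
    exact (mul_pos_of_neg_of_neg (by linarith [hF (mem_Iic.1 hu), hF (mem_Ici.1 hv)])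
      (by linarith [hG (mem_Iic.1 hu), hG (mem_Ici.1 hv)])).ne'
  have := measure_mono_null hsub (ae_iff.1 h)
  rw [Measure.prod_prod] at this
  exact mul_ne_zero hx hy this

theorem Monotone.forall_eq_or_forall_eq {α β γ : Type*} [LinearOrder α] [PartialOrder β]
    [PartialOrder γ] {F : α → β} {G : α → γ} {s : Set α} (hF : Monotone F) (hG : Monotone G)
    (h : ∀ x ∈ s, ∀ y ∈ s, x < y → F x = F y ∨ G x = G y) :
    (∀ x ∈ s, ∀ y ∈ s, x < y → F x = F y) ∨ ∀ x ∈ s, ∀ y ∈ s, x < y → G x = G y := by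
  by_contra! hne
  obtain ⟨⟨a, ha, b, hb, hab, hFab⟩, ⟨c, hc, d, hd, hcd, hGcd⟩⟩ := hne
  rcases h (min a c) (min_rec' s ha hc) (max b d) (max_rec' s hb hd)
    ((min_le_left a c).trans_lt (hab.trans_le (le_max_left b d))) with hF' | hG'
  · exact hFab (le_antisymm (hF hab.le)
      ((hF (le_max_left b d)).trans (hF'.symm.le.trans (hF (min_le_left a c)))))
  · exact hGcd (le_antisymm (hG hcd.le)
      ((hG (le_max_right b d)).trans (hG'.symm.le.trans (hG (min_le_right a c)))))

abbrev vol01 : Measure ℝ := volume.restrict (Ioc 0 1)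

instance : IsProbabilityMeasure vol01 := ⟨by simp⟩

theorem vol01_ne_zero_of_Ioo_subset {s : Set ℝ} {a b : ℝ} (h0 : 0 ≤ a) (hab : a < b) (h1 : b ≤ 1)
    (hs : Ioo a b ⊆ s) : vol01 s ≠ 0 := by
  apply ne_of_gt
  calc (0 : ENNReal) < volume (Ioo a b) := by simpa using hab
    _ = vol01 (Ioo a b) := (Measure.restrict_eq_self _ (Ioo_subset_Ioc_self.trans
          (Ioc_subset_Ioc h0 h1))).symm
    _ ≤ vol01 s := measure_mono hs

theorem frequently_nhdsGT_of_ae_vol01 {P : ℝ → Prop} (h : ∀ᵐ y ∂vol01, P y) {x : ℝ}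
    (hx : x ∈ Ico 0 1) : ∃ᶠ y in 𝓝[>] x, P y := by
  refine (nhdsGT_basis x).frequently_iff.2 fun b hb => ?_
  have hpos : vol01 (Ioo x b) ≠ 0 :=
    vol01_ne_zero_of_Ioo_subset hx.1 (lt_min hb hx.2) (min_le_right b 1)
      (Ioo_subset_Ioo_right (min_le_left b 1))
  exact ((frequently_ae_mem_iff.2 hpos).and_eventually h).exists

theorem integral_indicator_Ici_vol01 {t : ℝ} (ht : t ∈ Icc 0 1) :
    ∫ x, (Ici t).indicator 1 x ∂vol01 = 1 - t := by
  rw [integral_indicator_one measurableSet_Ici, measureReal_restrict_apply measurableSet_Ici,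
    measureReal_congr ((Ioi_ae_eq_Ici (a := t)).symm.inter (ae_eq_refl (Ioc 0 1))), inter_comm,
    Ioc_inter_Ioi, max_eq_right ht.1, Real.volume_real_Ioc_of_le ht.2]

theorem Monotone.forall_eq_or_forall_eq_of_integral_mul_eq {F G : ℝ → ℝ} (hF : Monotone F)
    (hG : Monotone G) (hFi : Integrable F vol01) (hGi : Integrable G vol01)
    (hFGi : Integrable (fun x => F x * G x) vol01)
    (h : ∫ x, F x * G x ∂vol01 = (∫ x, F x ∂vol01) * ∫ x, G x ∂vol01) :
    (∀ x ∈ Ioo (0 : ℝ) 1, ∀ y ∈ Ioo (0 : ℝ) 1, x < y → F x = F y) ∨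
      ∀ x ∈ Ioo (0 : ℝ) 1, ∀ y ∈ Ioo (0 : ℝ) 1, x < y → G x = G y := by
  have hae := Monovary.ae_sub_mul_sub_eq_zero (hF.monovary hG) hFi hGi hFGi h
  refine hF.forall_eq_or_forall_eq hG fun x hx y hy hxy => ?_
  exact hF.eq_or_eq_of_ae_sub_mul_sub_eq_zero hG hae hxy.le
    (vol01_ne_zero_of_Ioo_subset le_rfl hx.1 hx.2.le fun z hz => mem_Iic.2 hz.2.le)
    (vol01_ne_zero_of_Ioo_subset hy.1.le hy.2 le_rfl fun z hz => mem_Ici.2 hz.1.le)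

theorem ae_eq_integral_of_forall_eq {F : ℝ → ℝ}
    (h : ∀ x ∈ Ioo (0 : ℝ) 1, ∀ y ∈ Ioo (0 : ℝ) 1, x < y → F x = F y) :
    F =ᵐ[vol01] fun _ => ∫ x, F x ∂vol01 := by
  have hhalf : (1 / 2 : ℝ) ∈ Ioo 0 1 := by norm_num
  have hconst : F =ᵐ[vol01] fun _ => F (1 / 2) := by
    filter_upwards [ae_restrict_mem measurableSet_Ioc, Measure.ae_ne vol01 1] with x hx hx1
    have hx' : x ∈ Ioo (0 : ℝ) 1 := ⟨hx.1, hx.2.lt_of_ne hx1⟩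
    rcases lt_trichotomy x (1 / 2) with hlt | rfl | hgt
    · exact h x hx' _ hhalf hlt
    · rfl
    · exact (h _ hhalf x hx' hgt).symm
  rw [integral_congr_ae hconst]
  simpa using hconst

-- A jump of `G` below (above) `t` would push `∫ G` above (below) `1 - t`.
theorem Monotone.ae_eq_indicator_Ici {G : ℝ → ℝ} {t : ℝ} (hG : Monotone G)
    (h01 : ∀ᵐ x ∂vol01, G x = 0 ∨ G x = 1) (hint : ∫ x, G x ∂vol01 = 1 - t) :
    G =ᵐ[vol01] (Ici t).indicator 1 := by
  have hGi : Integrable G vol01 :=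
    .of_bound hG.measurable.aestronglyMeasurable 1 (h01.mono fun x hx => by
      rcases hx with hx | hx <;> simp [hx])
  have hIi : ∀ x, Integrable ((Ici x).indicator 1) vol01 := fun x =>
    (integrable_const (1 : ℝ)).indicator measurableSet_Ici
  filter_upwards [h01, ae_restrict_mem measurableSet_Ioc, Measure.ae_ne vol01 t] with x hx hxI hxt
  have hxI' : x ∈ Icc 0 1 := Ioc_subset_Icc_self hxI
  rcases hx with h0 | h1
  · have hxt' : x < t := by
      by_contra! htx
      have hle : G ≤ᵐ[vol01] (Ici x).indicator 1 := by
        filter_upwards [h01] with y hy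
        by_cases hyx : x ≤ y
        · rcases hy with hy | hy <;> simp [indicator_of_mem (mem_Ici.2 hyx), hy]
        · rw [indicator_of_notMem (by simpa using hyx)]
          exact h0 ▸ hG (not_le.1 hyx).le
      have := integral_mono_ae hGi (hIi x) hle
      rw [hint, integral_indicator_Ici_vol01 hxI'] at this
      exact hxt (le_antisymm (by linarith) htx)
    rw [h0, indicator_of_notMem (notMem_Ici.2 hxt')]
  · have htx : t ≤ x := by
      by_contra! hxt'
      have hle : (Ici x).indicator 1 ≤ᵐ[vol01] G := by
        filter_upwards [h01] with y hy
        by_cases hyx : x ≤ y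
        · rw [indicator_of_mem (mem_Ici.2 hyx), Pi.one_apply, ← h1]
          exact hG hyx
        · rw [indicator_of_notMem (by simpa using hyx)]
          rcases hy with hy | hy <;> simp [hy]
      have := integral_mono_ae (hIi x) hGi hle
      rw [hint, integral_indicator_Ici_vol01 hxI'] at this
      linarith
    simp [indicator_of_mem (mem_Ici.2 htx), h1]

theorem abs_sub_le_add_sub_two_mul {a b : ℝ} (ha : a ∈ Icc 0 1) (hb : b ∈ Icc 0 1) :
    |a - b| ≤ a + b - 2 * (a * b) :=
  abs_sub_le_iff.2 ⟨by nlinarith [mul_nonneg hb.1 (sub_nonneg.2 ha.2)],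
    by nlinarith [mul_nonneg ha.1 (sub_nonneg.2 hb.2)]⟩

theorem eq_zero_or_eq_one_of_abs_sub_eq {a b : ℝ} (ha : a ∈ Ioo 0 1)
    (h : |a - b| = a + b - 2 * (a * b)) : b = 0 ∨ b = 1 := by
  rcases le_total b a with hba | hab
  · rw [abs_of_nonneg (sub_nonneg.2 hba)] at h
    exact Or.inl (by nlinarith [ha.2])
  · rw [abs_of_nonpos (sub_nonpos.2 hab)] at h
    exact Or.inr (by nlinarith [ha.1])

theorem integrable_of_mem_Icc {α : Type*} [MeasurableSpace α] {μ : Measure α} [IsFiniteMeasure μ]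
    {F : α → ℝ} (hF : Measurable F) (h01 : ∀ x, F x ∈ Icc 0 1) : Integrable F μ :=
  .of_bound hF.aestronglyMeasurable 1 (ae_of_all _ fun x => by
    rw [Real.norm_eq_abs, abs_le]
    exact ⟨by linarith [(h01 x).1], (h01 x).2⟩)

theorem two_mul_mul_sub_integral_abs_sub {α : Type*} [MeasurableSpace α] {μ : Measure α}
    {F G : α → ℝ} {t : ℝ} (hF : Integrable F μ) (hG : Integrable G μ)
    (hFG : Integrable (fun x => F x * G x) μ) (hFt : ∫ x, F x ∂μ = 1 - t)
    (hGt : ∫ x, G x ∂μ = 1 - t) :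
    2 * t * (1 - t) - ∫ x, |F x - G x| ∂μ
      = ∫ x, (F x + G x - 2 * (F x * G x) - |F x - G x|) ∂μ
        + 2 * (∫ x, F x * G x ∂μ - (∫ x, F x ∂μ) * ∫ x, G x ∂μ) := by
  rw [integral_sub (by exact (hF.add hG).sub (hFG.const_mul 2)) (by exact (hF.sub hG).abs),
    integral_sub (by exact hF.add hG) (hFG.const_mul 2), integral_add hF hG, integral_const_mul,
    hFt, hGt]
  ring

theorem integral_abs_sub_le_of_monotone {μ : Measure ℝ} [IsProbabilityMeasure μ] {F G : ℝ → ℝ}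
    {t : ℝ} (hF : Monotone F) (hG : Monotone G) (hF01 : ∀ x, F x ∈ Icc 0 1)
    (hG01 : ∀ x, G x ∈ Icc 0 1) (hFt : ∫ x, F x ∂μ = 1 - t) (hGt : ∫ x, G x ∂μ = 1 - t) :
    ∫ x, |F x - G x| ∂μ ≤ 2 * t * (1 - t) := by
  have hFi := integrable_of_mem_Icc (μ := μ) hF.measurable hF01
  have hGi := integrable_of_mem_Icc (μ := μ) hG.measurable hG01
  have hFGi := integrable_of_mem_Icc (μ := μ) (hF.measurable.mul hG.measurable) fun x =>
    ⟨mul_nonneg (hF01 x).1 (hG01 x).1, mul_le_one₀ (hF01 x).2 (hG01 x).1 (hG01 x).2⟩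
  have hgap := two_mul_mul_sub_integral_abs_sub hFi hGi hFGi hFt hGt
  have hpt := integral_nonneg (μ := μ) fun x =>
    sub_nonneg.2 (abs_sub_le_add_sub_two_mul (hF01 x) (hG01 x))
  have hcheb := (hF.monovary hG).integral_mul_integral_le_integral_mul hFi hGi hFGi
  linarith

theorem ae_eq_const_of_integral_eq {F : ℝ → ℝ} {t : ℝ} (hF : Measurable F)
    (hF01 : ∀ x, F x ∈ Icc 0 1) (ht : t = 0 ∨ t = 1) (hFt : ∫ x, F x ∂vol01 = 1 - t) :
    F =ᵐ[vol01] fun _ => 1 - t := by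
  have hFi : Integrable F vol01 := integrable_of_mem_Icc hF hF01
  rcases ht with rfl | rfl
  · refine (integral_eq_iff_of_ae_le hFi (integrable_const _) (ae_of_all _ fun x => ?_)).1 ?_
    · simpa using (hF01 x).2
    · simpa using hFt
  · simp only [sub_self] at hFt ⊢
    exact (integral_eq_zero_iff_of_nonneg (fun x => (hF01 x).1) hFi).1 hFt

theorem Monotone.ae_eq_indicator_Ici_of_ae_eq_const {F G : ℝ → ℝ} {t : ℝ} (hG : Monotone G)
    (ht : t ∈ Ioo 0 1) (hGt : ∫ x, G x ∂vol01 = 1 - t) (hF : F =ᵐ[vol01] fun _ => 1 - t)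
    (hFG : ∀ᵐ x ∂vol01, |F x - G x| = F x + G x - 2 * (F x * G x)) :
    G =ᵐ[vol01] (Ici t).indicator 1 := by
  refine hG.ae_eq_indicator_Ici ?_ hGt
  filter_upwards [hF, hFG] with x hFx hx
  rw [hFx] at hx
  exact eq_zero_or_eq_one_of_abs_sub_eq ⟨by linarith [ht.2], by linarith [ht.1]⟩ hx

theorem ae_eq_of_integral_abs_sub_eq {F G : ℝ → ℝ} {t : ℝ} (hF : Monotone F) (hG : Monotone G)
    (hF01 : ∀ x, F x ∈ Icc 0 1) (hG01 : ∀ x, G x ∈ Icc 0 1) (ht : t ∈ Icc 0 1)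
    (hFt : ∫ x, F x ∂vol01 = 1 - t) (hGt : ∫ x, G x ∂vol01 = 1 - t)
    (heq : ∫ x, |F x - G x| ∂vol01 = 2 * t * (1 - t)) :
    (F =ᵐ[vol01] (fun _ => 1 - t) ∧ G =ᵐ[vol01] (Ici t).indicator 1) ∨
      (F =ᵐ[vol01] (Ici t).indicator 1 ∧ G =ᵐ[vol01] fun _ => 1 - t) := by
  by_cases hend : t = 0 ∨ t = 1
  · have hGc := ae_eq_const_of_integral_eq hG.measurable hG01 hend hGt
    refine Or.inl ⟨ae_eq_const_of_integral_eq hF.measurable hF01 hend hFt,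
      hG.ae_eq_indicator_Ici (hGc.mono fun x hx => ?_) hGt⟩
    rcases hend with rfl | rfl <;> simp [hx]
  have ht' : t ∈ Ioo 0 1 := ⟨ht.1.lt_of_ne (Ne.symm fun h => hend (Or.inl h)),
    ht.2.lt_of_ne fun h => hend (Or.inr h)⟩
  have hFi := integrable_of_mem_Icc (μ := vol01) hF.measurable hF01
  have hGi := integrable_of_mem_Icc (μ := vol01) hG.measurable hG01
  have hFGi := integrable_of_mem_Icc (μ := vol01) (hF.measurable.mul hG.measurable) fun x =>
    ⟨mul_nonneg (hF01 x).1 (hG01 x).1, mul_le_one₀ (hF01 x).2 (hG01 x).1 (hG01 x).2⟩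
  -- both nonnegative terms of the deficit `2t(1-t) - ∫ |F - G|` vanish
  have hgap := two_mul_mul_sub_integral_abs_sub hFi hGi hFGi hFt hGt
  have hpt_nonneg : 0 ≤ fun x => F x + G x - 2 * (F x * G x) - |F x - G x| := fun x =>
    sub_nonneg.2 (abs_sub_le_add_sub_two_mul (hF01 x) (hG01 x))
  have hpt_int := integral_nonneg (μ := vol01) hpt_nonneg
  have hcheb := (hF.monovary hG).integral_mul_integral_le_integral_mul hFi hGi hFGi
  have hmul : ∫ x, F x * G x ∂vol01 = (∫ x, F x ∂vol01) * ∫ x, G x ∂vol01 := by linarith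
  have hpt : ∀ᵐ x ∂vol01, |F x - G x| = F x + G x - 2 * (F x * G x) := by
    have := (integral_eq_zero_iff_of_nonneg hpt_nonneg
      ((((hFi.add hGi).sub (hFGi.const_mul 2))).sub (hFi.sub hGi).abs)).1 (by linarith)
    filter_upwards [this] with x hx
    linarith [show F x + G x - 2 * (F x * G x) - |F x - G x| = 0 from hx]
  rcases hF.forall_eq_or_forall_eq_of_integral_mul_eq hG hFi hGi hFGi hmul with hFc | hGc
  · have hFc' := hFt ▸ ae_eq_integral_of_forall_eq hFc
    exact Or.inl ⟨hFc', hG.ae_eq_indicator_Ici_of_ae_eq_const ht' hGt hFc' hpt⟩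
  · have hGc' := hGt ▸ ae_eq_integral_of_forall_eq hGc
    refine Or.inr ⟨hF.ae_eq_indicator_Ici_of_ae_eq_const ht' hFt hGc' ?_, hGc'⟩
    filter_upwards [hpt] with x hx
    rw [abs_sub_comm, hx]
    ring

theorem cdfI_mem_Icc (μ : Measure ℝ) [IsProbabilityMeasure μ] (x : ℝ) : cdfI μ x ∈ Icc 0 1 :=
  ⟨ENNReal.toReal_nonneg, measureReal_le_one⟩

theorem monotone_cdfI (μ : Measure ℝ) [IsFiniteMeasure μ] : Monotone (cdfI μ) := fun _ _ hxy =>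
  ENNReal.toReal_mono (measure_ne_top _ _) (measure_mono (Icc_subset_Icc le_rfl hxy))

theorem ae_mem_Icc_of_mem_P01 {μ : Measure ℝ} (hμ : μ ∈ P01) : ∀ᵐ y ∂μ, y ∈ Icc (0 : ℝ) 1 :=
  have := hμ.1
  (prob_compl_eq_zero_iff measurableSet_Icc).2 hμ.2

theorem cdf_eq_one_of_mem_P01 {μ : Measure ℝ} (hμ : μ ∈ P01) {x : ℝ} (hx : 1 ≤ x) :
    cdf μ x = 1 := by
  have := hμ.1
  have : Iic x =ᵐ[μ] univ := (ae_mem_Icc_of_mem_P01 hμ).mono fun y hy =>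
    propext ⟨fun _ => trivial, fun _ => hy.2.trans hx⟩
  rw [cdf_eq_real, measureReal_congr this, probReal_univ]

theorem cdf_eq_cdfI {μ : Measure ℝ} (hμ : μ ∈ P01) (x : ℝ) : cdf μ x = cdfI μ x := by
  have := hμ.1
  have : Iic x =ᵐ[μ] Icc 0 x := (ae_mem_Icc_of_mem_P01 hμ).mono fun y hy =>
    propext ⟨fun hyx => ⟨hy.1, hyx⟩, fun hyx => hyx.2⟩
  rw [cdf_eq_real, measureReal_congr this, cdfI, measureReal_def]

-- Right continuity of `cdf` upgrades a.e. equality on `(0,1)` to equality everywhere.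
theorem eq_of_cdfI_ae_eq {μ ν : Measure ℝ} (hμ : μ ∈ P01) (hν : ν ∈ P01)
    (h : cdfI μ =ᵐ[vol01] cdfI ν) : μ = ν := by
  have := hμ.1
  have := hν.1
  refine Measure.eq_of_cdf μ ν (StieltjesFunction.ext fun x => ?_)
  rcases lt_or_ge x 0 with hx0 | hx0
  · simp [cdf_eq_cdfI hμ, cdf_eq_cdfI hν, cdfI, Icc_eq_empty (not_le.2 hx0)]
  rcases lt_or_ge x 1 with hx1 | hx1
  · refine tendsto_nhds_unique_of_frequently_eq
      (((cdf μ).right_continuous x).mono Ioi_subset_Ici_self)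
      (((cdf ν).right_continuous x).mono Ioi_subset_Ici_self) ?_
    exact (frequently_nhdsGT_of_ae_vol01 h ⟨hx0, hx1⟩).mono fun y hy => by
      rw [cdf_eq_cdfI hμ, cdf_eq_cdfI hν, hy]
  · rw [cdf_eq_one_of_mem_P01 hμ hx1, cdf_eq_one_of_mem_P01 hν hx1]

theorem dW1I_eq_integral (μ ν : Measure ℝ) :
    dW1I μ ν = ∫ x, |cdfI μ x - cdfI ν x| ∂vol01 :=
  intervalIntegral.integral_of_le zero_le_one

theorem dW1I_comm (μ ν : Measure ℝ) : dW1I μ ν = dW1I ν μ := by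
  simp only [dW1I, abs_sub_comm]

theorem cdfI_dirac {s : ℝ} (hs : 0 ≤ s) (x : ℝ) :
    cdfI (Measure.dirac s) x = (Ici s).indicator 1 x := by
  by_cases hsx : s ≤ x
  · simp [cdfI, hs, hsx]
  · simp [cdfI, hsx]

theorem integral_cdfI (μ : Measure ℝ) [IsProbabilityMeasure μ] :
    ∫ x, cdfI μ x ∂vol01 = 1 - dW1I (Measure.dirac 0) μ := by
  have hint := integrable_of_mem_Icc (μ := vol01) (monotone_cdfI μ).measurable (cdfI_mem_Icc μ)
  have : (fun x => |cdfI (Measure.dirac 0) x - cdfI μ x|) =ᵐ[vol01] fun x => 1 - cdfI μ x := by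
    filter_upwards [ae_restrict_mem measurableSet_Ioc] with x hx
    rw [cdfI_dirac le_rfl, indicator_of_mem (mem_Ici.2 hx.1.le), Pi.one_apply,
      abs_of_nonneg (sub_nonneg.2 (cdfI_mem_Icc μ x).2)]
  rw [dW1I_eq_integral, integral_congr_ae this, integral_sub (integrable_const 1) hint]
  simp

def endpointMix (t : ℝ) : Measure ℝ :=
  ENNReal.ofReal (1 - t) • Measure.dirac (0 : ℝ) + ENNReal.ofReal t • Measure.dirac (1 : ℝ)

theorem dirac_mem_P01 {s : ℝ} (hs : s ∈ Icc (0 : ℝ) 1) : Measure.dirac s ∈ P01 :=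
  ⟨inferInstance, Measure.dirac_apply_of_mem hs⟩

theorem endpointMix_mem_P01 {t : ℝ} (ht : t ∈ Icc (0 : ℝ) 1) : endpointMix t ∈ P01 := by
  have hsum : ENNReal.ofReal (1 - t) + ENNReal.ofReal t = 1 := by
    rw [← ENNReal.ofReal_add (sub_nonneg.2 ht.2) ht.1]
    simp
  refine ⟨⟨by simp [endpointMix, hsum]⟩, ?_⟩
  simp [endpointMix, hsum]

theorem cdfI_endpointMix {t x : ℝ} (ht : t ≤ 1) (hx : x ∈ Ico (0 : ℝ) 1) :
    cdfI (endpointMix t) x = 1 - t := by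
  simp [cdfI, endpointMix, hx.1, hx.2, sub_nonneg.2 ht]

theorem dW1I_endpointMix_dirac {t : ℝ} (ht : t ∈ Icc (0 : ℝ) 1) :
    dW1I (endpointMix t) (Measure.dirac t) = 2 * t * (1 - t) := by
  have : (fun x => |cdfI (endpointMix t) x - cdfI (Measure.dirac t) x|)
      =ᵐ[vol01] fun x => (1 - t) + (2 * t - 1) * (Ici t).indicator 1 x := by
    filter_upwards [ae_restrict_mem measurableSet_Ioc, Measure.ae_ne vol01 1] with x hx hx1
    rw [cdfI_endpointMix ht.2 ⟨hx.1.le, hx.2.lt_of_ne hx1⟩, cdfI_dirac ht.1]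
    by_cases htx : t ≤ x
    · rw [indicator_of_mem (mem_Ici.2 htx), Pi.one_apply, sub_sub_cancel_left, abs_neg,
        abs_of_nonneg ht.1]
      ring
    · simp [htx, abs_of_nonneg (sub_nonneg.2 ht.2)]
  rw [dW1I_eq_integral, integral_congr_ae this, integral_add (integrable_const _)
    (by exact ((integrable_const (1 : ℝ)).indicator measurableSet_Ici).const_mul _),
    integral_const_mul, integral_indicator_Ici_vol01 ht, integral_const, probReal_univ, one_smul]
  ring

/-- The `t`-slice `S_t = {μ : d(δ₀,μ) = t}` of `W₁([0,1])` has diameter `2t(1-t)`,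
attained exactly at the pair `{(1-t)δ₀ + tδ₁, δ_t}`. -/
theorem slice_diameter (t : ℝ) (ht : t ∈ Set.Icc (0:ℝ) 1)
    (ρ : Measure ℝ) (hρ : ρ ∈ P01) (σ : Measure ℝ) (hσ : σ ∈ P01)
    (hρt : dW1I (Measure.dirac 0) ρ = t) (hσt : dW1I (Measure.dirac 0) σ = t) :
    dW1I ρ σ ≤ 2 * t * (1 - t) ∧
    (dW1I ρ σ = 2 * t * (1 - t) ↔
      (ρ = ENNReal.ofReal (1 - t) • Measure.dirac (0:ℝ) + ENNReal.ofReal t • Measure.dirac (1:ℝ)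
          ∧ σ = Measure.dirac t) ∨
      (ρ = Measure.dirac t ∧
        σ = ENNReal.ofReal (1 - t) • Measure.dirac (0:ℝ) + ENNReal.ofReal t • Measure.dirac (1:ℝ))) := by
  have := hρ.1
  have := hσ.1
  have hρi : ∫ x, cdfI ρ x ∂vol01 = 1 - t := by rw [integral_cdfI, hρt]
  have hσi : ∫ x, cdfI σ x ∂vol01 = 1 - t := by rw [integral_cdfI, hσt]
  have hmix : cdfI (endpointMix t) =ᵐ[vol01] fun _ => 1 - t := by
    filter_upwards [ae_restrict_mem measurableSet_Ioc, Measure.ae_ne vol01 1] with x hx hx1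
    exact cdfI_endpointMix ht.2 ⟨hx.1.le, hx.2.lt_of_ne hx1⟩
  have hdirac : cdfI (Measure.dirac t) = (Ici t).indicator 1 := funext (cdfI_dirac ht.1)
  rw [dW1I_eq_integral]
  refine ⟨integral_abs_sub_le_of_monotone (monotone_cdfI ρ) (monotone_cdfI σ) (cdfI_mem_Icc ρ)
    (cdfI_mem_Icc σ) hρi hσi, fun heq => ?_, ?_⟩
  · rcases ae_eq_of_integral_abs_sub_eq (monotone_cdfI ρ) (monotone_cdfI σ) (cdfI_mem_Icc ρ)
      (cdfI_mem_Icc σ) ht hρi hσi heq with ⟨hρc, hσc⟩ | ⟨hρc, hσc⟩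
    · exact Or.inl ⟨eq_of_cdfI_ae_eq hρ (endpointMix_mem_P01 ht) (hρc.trans hmix.symm),
        eq_of_cdfI_ae_eq hσ (dirac_mem_P01 ht) (hdirac ▸ hσc)⟩
    · exact Or.inr ⟨eq_of_cdfI_ae_eq hρ (dirac_mem_P01 ht) (hdirac ▸ hρc),
        eq_of_cdfI_ae_eq hσ (endpointMix_mem_P01 ht) (hσc.trans hmix.symm)⟩
  · rintro (⟨rfl, rfl⟩ | ⟨rfl, rfl⟩)
    · rw [← dW1I_eq_integral]
      exact dW1I_endpointMix_dirac ht
    · rw [← dW1I_eq_integral, dW1I_comm]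
      exact dW1I_endpointMix_dirac ht
end
end

section
/- For every μ ∈ W₁([0,1]) and t ∈ [0,1], d_{W₁}(μ, δ_t) = ∫₀ᵗ F_μ(x) dx + ∫ₜ¹ (1 − F_μ(x)) dx. Consequently, for every t ∈ [0,1) the right derivative of s ↦ d_{W₁}(μ, δ_s) at t equals 2F_μ(t) − 1, and hence a measure μ ∈ W₁([0,1]) is uniquely determined by its distances from all Dirac masses. -/
open MeasureTheory Set Filter
open scoped Topology

noncomputable section

/-! Against `δ_t` the integrand `|F_μ - F_{δ_t}|` is `F_μ` left of `t` and `1 - F_μ` right of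
`t`, which gives the formula. Differentiating it from the right, by the fundamental theorem
of calculus and the right-continuity of `F_μ`, gives `F_μ(t) - (1 - F_μ(t))`. So the distances
to all Dirac masses recover `F_μ` on `[0,1)`, and a measure concentrated on `[0,1]` is
determined by its distribution function there. -/

section CDF

variable (μ : Measure ℝ)

lemma cdfI_nonneg (x : ℝ) : 0 ≤ cdfI μ x := ENNReal.toReal_nonneg

lemma cdfI_of_neg {x : ℝ} (hx : x < 0) : cdfI μ x = 0 := by
  simp [cdfI, Icc_eq_empty_of_lt hx]

lemma cdfI_le_one [IsProbabilityMeasure μ] (x : ℝ) : cdfI μ x ≤ 1 :=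
  ENNReal.toReal_le_of_le_ofReal zero_le_one (by simpa using prob_le_one)

lemma cdfI_mono [IsFiniteMeasure μ] : Monotone (cdfI μ) := fun _ _ hxy =>
  ENNReal.toReal_mono (measure_ne_top _ _) (measure_mono (Icc_subset_Icc_right hxy))

lemma cdfI_continuousWithinAt_Ioi [IsFiniteMeasure μ] (t : ℝ) :
    ContinuousWithinAt (cdfI μ) (Ioi t) t := by
  have hInter : ⋂ r > t, Icc 0 r = Icc 0 t := by
    ext x
    simp only [mem_iInter, mem_Icc]
    exact ⟨fun h => ⟨(h (t + 1) (by linarith)).1, le_of_forall_gt_imp_ge_of_dense fun r hr =>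
      (h r hr).2⟩, fun hx r hr => ⟨hx.1, hx.2.trans hr.le⟩⟩
  have hlim : Tendsto (fun r => μ (Icc 0 r)) (𝓝[>] t) (𝓝 (μ (Icc 0 t))) := by
    rw [← hInter]
    exact tendsto_measure_biInter_gt (fun _ _ => nullMeasurableSet_Icc)
      (fun _ _ _ hij => Icc_subset_Icc_right hij) ⟨t + 1, by linarith, measure_ne_top _ _⟩
  exact (ENNReal.tendsto_toReal (measure_ne_top _ _)).comp hlim

lemma cdfI_dirac_s6 {t : ℝ} (ht : 0 ≤ t) (x : ℝ) :
    cdfI (Measure.dirac t) x = if t ≤ x then 1 else 0 := by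
  by_cases h : t ≤ x
  · simp [cdfI, h, ht]
  · simp [cdfI, h]

end CDF

namespace P01

variable {μ ν : Measure ℝ}

lemma measure_Iio_zero (hμ : μ ∈ P01) : μ (Iio 0) = 0 := by
  have := hμ.1
  refine measure_mono_null (fun x hx => ?_) ((prob_compl_eq_zero_iff measurableSet_Icc).2 hμ.2)
  exact fun hx' => not_le.2 hx hx'.1

lemma measure_Iic (hμ : μ ∈ P01) (x : ℝ) : μ (Iic x) = μ (Icc 0 x) := by
  have hneg : μ (Iic x \ Ici 0) = 0 :=
    measure_mono_null (fun _ hy => mem_Iio.2 (not_le.1 hy.2)) (measure_Iio_zero hμ)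
  rw [← measure_inter_add_sdiff (Iic x) (measurableSet_Ici (a := 0)), hneg, add_zero,
    Iic_inter_Ici]

lemma cdfI_of_one_le (hμ : μ ∈ P01) {x : ℝ} (hx : 1 ≤ x) : cdfI μ x = 1 := by
  have := hμ.1
  have h : μ (Icc 0 x) = 1 :=
    le_antisymm prob_le_one (hμ.2 ▸ measure_mono (Icc_subset_Icc_right hx))
  simp [cdfI, h]

lemma ext_of_cdfI (hμ : μ ∈ P01) (hν : ν ∈ P01)
    (h : ∀ x ∈ Ico (0 : ℝ) 1, cdfI μ x = cdfI ν x) : μ = ν := by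
  have := hμ.1
  have := hν.1
  have hall : ∀ x, cdfI μ x = cdfI ν x := by
    intro x
    rcases lt_or_ge x 0 with hx0 | hx0
    · rw [cdfI_of_neg μ hx0, cdfI_of_neg ν hx0]
    rcases lt_or_ge x 1 with hx1 | hx1
    · exact h x ⟨hx0, hx1⟩
    · rw [cdfI_of_one_le hμ hx1, cdfI_of_one_le hν hx1]
  refine Measure.ext_of_Iic μ ν fun x => ?_
  rw [measure_Iic hμ, measure_Iic hν]
  exact (ENNReal.toReal_eq_toReal_iff' (measure_ne_top _ _) (measure_ne_top _ _)).1 (hall x)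

end P01

section Dirac

variable (μ : Measure ℝ) [IsProbabilityMeasure μ]

theorem dW1I_dirac {t : ℝ} (ht : t ∈ Icc (0 : ℝ) 1) :
    dW1I μ (Measure.dirac t)
      = (∫ x in (0:ℝ)..t, cdfI μ x) + ∫ x in t..(1:ℝ), (1 - cdfI μ x) := by
  obtain ⟨ht0, ht1⟩ := ht
  have hint : ∀ a b : ℝ, IntervalIntegrable
      (fun x => |cdfI μ x - cdfI (Measure.dirac t) x|) volume a b := fun a b =>
    (((cdfI_mono μ).intervalIntegrable).sub (cdfI_mono _).intervalIntegrable).abs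
  rw [dW1I, ← intervalIntegral.integral_add_adjacent_intervals (hint 0 t) (hint t 1)]
  congr 1
  · refine intervalIntegral.integral_congr_ae ?_
    filter_upwards [Measure.ae_ne volume t] with x hxt hx
    rw [uIoc_of_le ht0] at hx
    rw [cdfI_dirac_s6 ht0, if_neg (not_le.2 (lt_of_le_of_ne hx.2 hxt)), sub_zero,
      abs_of_nonneg (cdfI_nonneg μ x)]
  · refine intervalIntegral.integral_congr fun x hx => ?_
    rw [uIcc_of_le ht1] at hx
    rw [cdfI_dirac_s6 ht0, if_pos hx.1, abs_sub_comm, abs_of_nonneg (sub_nonneg.2 (cdfI_le_one μ x))]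

theorem hasDerivWithinAt_dW1I_dirac {t : ℝ} (ht : t ∈ Ico (0 : ℝ) 1) :
    HasDerivWithinAt (fun s => dW1I μ (Measure.dirac s)) (2 * cdfI μ t - 1) (Ioi t) t := by
  have hF := cdfI_mono μ
  have hleft : HasDerivWithinAt (fun s => ∫ x in (0:ℝ)..s, cdfI μ x) (cdfI μ t) (Ici t) t :=
    intervalIntegral.integral_hasDerivWithinAt_right hF.intervalIntegrable
      hF.measurable.aestronglyMeasurable.stronglyMeasurableAtFilter
      (cdfI_continuousWithinAt_Ioi μ t)
  have hright : HasDerivWithinAt (fun s => ∫ x in s..(1:ℝ), (1 - cdfI μ x))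
      (-(1 - cdfI μ t)) (Ici t) t :=
    intervalIntegral.integral_hasDerivWithinAt_left
      (intervalIntegrable_const.sub hF.intervalIntegrable)
      (measurable_const.sub hF.measurable).aestronglyMeasurable.stronglyMeasurableAtFilter
      (continuousWithinAt_const.sub (cdfI_continuousWithinAt_Ioi μ t))
  refine ((hleft.add hright).mono Ioi_subset_Ici_self).congr_of_eventuallyEq ?_
    (dW1I_dirac μ (Ico_subset_Icc_self ht)) |>.congr_deriv (by ring)
  filter_upwards [Ioc_mem_nhdsGT_of_mem ⟨le_rfl, ht.2⟩] with s hs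
  exact dW1I_dirac μ ⟨ht.1.trans hs.1.le, hs.2⟩

end Dirac

theorem P01.eq_of_dW1I_dirac_eq {μ ν : Measure ℝ} (hμ : μ ∈ P01) (hν : ν ∈ P01)
    (h : ∀ t ∈ Icc (0:ℝ) 1, dW1I μ (Measure.dirac t) = dW1I ν (Measure.dirac t)) :
    μ = ν := by
  have := hμ.1
  have := hν.1
  refine P01.ext_of_cdfI hμ hν fun t ht => ?_
  have hν' : HasDerivWithinAt (fun s => dW1I μ (Measure.dirac s)) (2 * cdfI ν t - 1) (Ioi t) t :=
    (hasDerivWithinAt_dW1I_dirac ν ht).congr_of_eventuallyEq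
      (by filter_upwards [Ioc_mem_nhdsGT_of_mem ⟨le_rfl, ht.2⟩] with s hs
          exact h s ⟨ht.1.trans hs.1.le, hs.2⟩)
      (h t (Ico_subset_Icc_self ht))
  have := (uniqueDiffWithinAt_Ioi t).eq_deriv _ (hasDerivWithinAt_dW1I_dirac μ ht) hν'
  linarith

/-- Formula for the distance of `μ` from Dirac masses, the right derivative
`2F_μ(t) - 1` of `s ↦ d(μ, δ_s)`, and the consequence that a measure in `W₁([0,1])`
is determined by its distances from all Dirac masses. -/
theorem dist_to_dirac (μ : Measure ℝ) (hμ : μ ∈ P01) :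
    (∀ t ∈ Set.Icc (0:ℝ) 1,
      dW1I μ (Measure.dirac t)
        = (∫ x in (0:ℝ)..t, cdfI μ x) + ∫ x in t..(1:ℝ), (1 - cdfI μ x)) ∧
    (∀ t ∈ Set.Ico (0:ℝ) 1,
      HasDerivWithinAt (fun s => dW1I μ (Measure.dirac s)) (2 * cdfI μ t - 1) (Set.Ioi t) t) ∧
    (∀ ν ∈ P01,
      (∀ t ∈ Set.Icc (0:ℝ) 1, dW1I μ (Measure.dirac t) = dW1I ν (Measure.dirac t)) → μ = ν) := by
  have := hμ.1
  exact ⟨fun _ ht => dW1I_dirac μ ht, fun _ ht => hasDerivWithinAt_dW1I_dirac μ ht,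
    fun _ hν h => P01.eq_of_dW1I_dirac_eq hμ hν h⟩

end
end

section
/- For distinct μ, ν ∈ W₁(ℝ), the metric midpoint set M(μ,ν) := {ξ ∈ W₁(ℝ) : d_{W₁}(μ,ξ) = d_{W₁}(ξ,ν) = (1/2)d_{W₁}(μ,ν)} satisfies (1/2)d_{W₁}(μ,ν) ≤ diam(M(μ,ν)) ≤ d_{W₁}(μ,ν). -/
open MeasureTheory Set

noncomputable section

/-- The Wasserstein space `W₁(ℝ)`: Borel probability measures on `ℝ` with finite
first moment. -/
def PR : Set (Measure ℝ) := {μ | IsProbabilityMeasure μ ∧ Integrable (fun x => |x|) μ}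

/-- The 1-Wasserstein distance on `ℝ` via Vallender's formula. -/
def dW1R (μ ν : Measure ℝ) : ℝ := ∫ x, |cdfR μ x - cdfR ν x|

/-- The metric midpoint set of `μ` and `ν` in `W₁(ℝ)`. -/
def Mid (μ ν : Measure ℝ) : Set (Measure ℝ) :=
  {ξ ∈ PR | dW1R μ ξ = dW1R μ ν / 2 ∧ dW1R ξ ν = dW1R μ ν / 2}

/-!
Write `F, G` for the cdfs of `μ, ν` and `d = d(μ, ν)`. A measure whose cdf lies pointwise between
`F` and `G` realises equality in the triangle inequality, `d(μ, ξ) + d(ξ, ν) = d`, so it is a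
midpoint as soon as `d(μ, ξ) = d / 2`; its first moment is finite because
`∫ |F_η - 1_{[0,∞)}| = ∫ |ω| dη`. The average `(F + G) / 2` is such a midpoint. So is a splice
`min F G` on `(-∞, a)`, `max F G` on `[a, ∞)`: its distance to `μ` is
`∫ (G - F)⁺ + ∫_{x < a} (F - G)`, and the intermediate value theorem finds `a` with this equal to
`d / 2 = ∫ (G - F)⁺ + ∫ (F - G) / 2`, unless `∫ (F - G) = 0`, when `max F G` itself is a
midpoint. The splice takes the value `F` or `G` at every point, hence
lies at distance exactly `d / 2` from the average. The upper bound `d` is the triangle inequality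
through `μ`.
-/

open Filter Topology ProbabilityTheory

lemma cdfR_eq_cdf (η : Measure ℝ) [IsProbabilityMeasure η] : cdfR η = cdf η :=
  funext fun x => (cdf_eq_real η x).symm

lemma monotone_cdfR (η : Measure ℝ) [IsProbabilityMeasure η] : Monotone (cdfR η) := by
  rw [cdfR_eq_cdf]; exact monotone_cdf η

lemma measurable_cdfR (η : Measure ℝ) [IsProbabilityMeasure η] : Measurable (cdfR η) :=
  (monotone_cdfR η).measurable

-- `min ω 0 ≤ x < max ω 0` says that `x` lies in `[ω, 0)` or in `[0, ω)`.
lemma ofReal_abs_cdfR_sub_cdfR_dirac (η : Measure ℝ) [IsProbabilityMeasure η] (x : ℝ) :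
    ENNReal.ofReal |cdfR η x - cdfR (Measure.dirac 0) x| = η {ω | min ω 0 ≤ x ∧ x < max ω 0} := by
  rcases lt_or_ge x 0 with hx | hx
  · have hset : {ω : ℝ | min ω 0 ≤ x ∧ x < max ω 0} = Iic x := by
      ext ω; simp [hx, hx.not_ge]
    rw [hset]
    simp [cdfR, hx.not_ge, ENNReal.ofReal_toReal (measure_ne_top η _)]
  · have hset : {ω : ℝ | min ω 0 ≤ x ∧ x < max ω 0} = Ioi x := by
      ext ω; simp [hx, hx.not_gt]
    have hcompl : η (Ioi x) = ENNReal.ofReal (1 - η.real (Iic x)) := by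
      rw [← compl_Iic, ← probReal_compl_eq_one_sub measurableSet_Iic, ofReal_measureReal]
    rw [hset, hcompl, abs_sub_comm]
    have hle : η.real (Iic x) ≤ 1 := measureReal_le_one
    simp [cdfR, hx, ← measureReal_def, abs_of_nonneg (sub_nonneg.2 hle)]

lemma lintegral_ofReal_abs_cdfR_sub_cdfR_dirac (η : Measure ℝ) [IsProbabilityMeasure η] :
    ∫⁻ x, ENNReal.ofReal |cdfR η x - cdfR (Measure.dirac 0) x| = ∫⁻ ω, ENNReal.ofReal |ω| ∂η := by
  set E : Set (ℝ × ℝ) := {p | min p.2 0 ≤ p.1 ∧ p.1 < max p.2 0}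
  have hE : MeasurableSet E :=
    (measurableSet_le (by fun_prop : Measurable fun p : ℝ × ℝ => min p.2 0) measurable_fst).inter
      (measurableSet_lt measurable_fst (by fun_prop : Measurable fun p : ℝ × ℝ => max p.2 0))
  calc ∫⁻ x, ENNReal.ofReal |cdfR η x - cdfR (Measure.dirac 0) x|
      = ∫⁻ x, η (Prod.mk x ⁻¹' E) := by simp_rw [ofReal_abs_cdfR_sub_cdfR_dirac]; rfl
    _ = (volume.prod η) E := (Measure.prod_apply hE).symm
    _ = ∫⁻ ω, volume ((fun x => (x, ω)) ⁻¹' E) ∂η := Measure.prod_apply_symm hE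
    _ = ∫⁻ ω, ENNReal.ofReal |ω| ∂η := by
      congr 1 with ω
      change volume (Ico (min ω 0) (max ω 0)) = _
      rw [Real.volume_Ico, max_sub_min_eq_abs', sub_zero]

lemma integrable_abs_iff_integrable_cdfR_sub_cdfR_dirac (η : Measure ℝ) [IsProbabilityMeasure η] :
    Integrable (fun x => |x|) η ↔ Integrable (fun x => cdfR η x - cdfR (Measure.dirac 0) x) := by
  have hmeas : Measurable fun x => cdfR η x - cdfR (Measure.dirac 0) x :=
    (measurable_cdfR η).sub (measurable_cdfR _)
  simp only [Integrable, continuous_abs.aestronglyMeasurable, hmeas.aestronglyMeasurable,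
    true_and, HasFiniteIntegral, Real.enorm_eq_ofReal_abs, abs_abs,
    lintegral_ofReal_abs_cdfR_sub_cdfR_dirac]

lemma integrable_cdfR_sub_cdfR_dirac {η : Measure ℝ} (hη : η ∈ PR) :
    Integrable (fun x => cdfR η x - cdfR (Measure.dirac 0) x) :=
  haveI := hη.1
  (integrable_abs_iff_integrable_cdfR_sub_cdfR_dirac η).1 hη.2

lemma integrable_cdfR_sub {μ ν : Measure ℝ} (hμ : μ ∈ PR) (hν : ν ∈ PR) :
    Integrable (fun x => cdfR μ x - cdfR ν x) := by
  refine ((integrable_cdfR_sub_cdfR_dirac hμ).sub (integrable_cdfR_sub_cdfR_dirac hν)).congr ?_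
  exact ae_of_all _ fun x => sub_sub_sub_cancel_right _ _ _

lemma abs_sub_le_of_mem_uIcc {a b c : ℝ} (h : c ∈ uIcc a b) (t : ℝ) :
    |c - t| ≤ |a - t| + |b - t| := by
  rcases mem_uIcc.1 h with ⟨h1, h2⟩ | ⟨h1, h2⟩ <;>
    cases abs_cases (c - t) <;> cases abs_cases (a - t) <;> cases abs_cases (b - t) <;> linarith

lemma abs_sub_add_abs_sub_of_mem_uIcc {a b c : ℝ} (h : c ∈ uIcc a b) :
    |a - c| + |c - b| = |a - b| := by
  have := dist_add_dist_of_mem_segment (segment_eq_uIcc a b ▸ h)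
  rwa [Real.dist_eq, Real.dist_eq, Real.dist_eq] at this

lemma mem_PR_of_cdfR_mem_uIcc {μ ν ξ : Measure ℝ} (hμ : μ ∈ PR) (hν : ν ∈ PR)
    [IsProbabilityMeasure ξ] (h : ∀ x, cdfR ξ x ∈ uIcc (cdfR μ x) (cdfR ν x)) : ξ ∈ PR := by
  refine ⟨inferInstance, (integrable_abs_iff_integrable_cdfR_sub_cdfR_dirac ξ).2 ?_⟩
  refine ((integrable_cdfR_sub_cdfR_dirac hμ).abs.add (integrable_cdfR_sub_cdfR_dirac hν).abs).mono'
    ((measurable_cdfR ξ).sub (measurable_cdfR _)).aestronglyMeasurable (ae_of_all _ fun x => ?_)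
  exact abs_sub_le_of_mem_uIcc (h x) _

lemma dW1R_comm (μ ν : Measure ℝ) : dW1R μ ν = dW1R ν μ := by
  simp only [dW1R, abs_sub_comm]

lemma dW1R_triangle {μ ν ξ : Measure ℝ} (hμ : μ ∈ PR) (hν : ν ∈ PR) (hξ : ξ ∈ PR) :
    dW1R μ ν ≤ dW1R μ ξ + dW1R ξ ν := by
  rw [dW1R, dW1R, dW1R, ← integral_add (integrable_cdfR_sub hμ hξ).abs
    (integrable_cdfR_sub hξ hν).abs]
  exact integral_mono (integrable_cdfR_sub hμ hν).abs
    ((integrable_cdfR_sub hμ hξ).abs.add (integrable_cdfR_sub hξ hν).abs)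
    fun x => abs_sub_le _ _ _

lemma dW1R_add_dW1R_of_mem_uIcc {μ ν ξ : Measure ℝ} (hμ : μ ∈ PR) (hν : ν ∈ PR) (hξ : ξ ∈ PR)
    (h : ∀ x, cdfR ξ x ∈ uIcc (cdfR μ x) (cdfR ν x)) :
    dW1R μ ξ + dW1R ξ ν = dW1R μ ν := by
  rw [dW1R, dW1R, dW1R, ← integral_add (integrable_cdfR_sub hμ hξ).abs
    (integrable_cdfR_sub hξ hν).abs]
  simp_rw [abs_sub_add_abs_sub_of_mem_uIcc (h _)]

lemma mem_Mid_of_cdfR_mem_uIcc {μ ν ξ : Measure ℝ} (hμ : μ ∈ PR) (hν : ν ∈ PR)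
    [IsProbabilityMeasure ξ] (h : ∀ x, cdfR ξ x ∈ uIcc (cdfR μ x) (cdfR ν x))
    (hhalf : dW1R μ ξ = dW1R μ ν / 2) : ξ ∈ Mid μ ν := by
  have hξ := mem_PR_of_cdfR_mem_uIcc hμ hν h
  refine ⟨hξ, hhalf, ?_⟩
  linarith [dW1R_add_dW1R_of_mem_uIcc hμ hν hξ h]

lemma dW1R_le_of_mem_Mid {μ ν ξ₁ ξ₂ : Measure ℝ} (hμ : μ ∈ PR) (h₁ : ξ₁ ∈ Mid μ ν)
    (h₂ : ξ₂ ∈ Mid μ ν) : dW1R ξ₁ ξ₂ ≤ dW1R μ ν := by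
  have := dW1R_triangle h₁.1 h₂.1 hμ
  rw [dW1R_comm ξ₁ μ, h₁.2.1, h₂.2.1] at this
  linarith

lemma dW1R_eq_two_mul_add {μ ν : Measure ℝ} (hμ : μ ∈ PR) (hν : ν ∈ PR) :
    dW1R μ ν = 2 * (∫ x, max (cdfR ν x - cdfR μ x) 0) + ∫ x, (cdfR μ x - cdfR ν x) := by
  rw [← integral_const_mul, ← integral_add ((integrable_cdfR_sub hν hμ).pos_part.const_mul 2)
    (integrable_cdfR_sub hμ hν), dW1R]
  congr 1 with x
  rcases le_total (cdfR μ x) (cdfR ν x) with h | h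
  · rw [abs_of_nonpos (by linarith), max_eq_left (by linarith)]; ring
  · rw [abs_of_nonneg (by linarith), max_eq_right (by linarith)]; ring

lemma exists_cdfR_eq (f : StieltjesFunction ℝ) (h0 : Tendsto f atBot (𝓝 0))
    (h1 : Tendsto f atTop (𝓝 1)) : ∃ η : Measure ℝ, IsProbabilityMeasure η ∧ cdfR η = f :=
  haveI := f.isProbabilityMeasure h0 h1
  ⟨f.measure, inferInstance, by rw [cdfR_eq_cdf, cdf_measure_stieltjesFunction f h0 h1]⟩

lemma exists_cdfR_eq_comp (μ ν : Measure ℝ) [IsProbabilityMeasure μ] [IsProbabilityMeasure ν]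
    {Φ : ℝ × ℝ → ℝ} (hmono : Monotone Φ) (hcont : Continuous Φ) (h0 : Φ (0, 0) = 0)
    (h1 : Φ (1, 1) = 1) :
    ∃ η : Measure ℝ, IsProbabilityMeasure η ∧ ∀ x, cdfR η x = Φ (cdfR μ x, cdfR ν x) := by
  let f : StieltjesFunction ℝ :=
    { toFun := fun x => Φ (cdf μ x, cdf ν x)
      mono' := hmono.comp ((monotone_cdf μ).prodMk (monotone_cdf ν))
      right_continuous' := fun x => hcont.continuousAt.comp_continuousWithinAt
        (((cdf μ).right_continuous x).prodMk ((cdf ν).right_continuous x)) }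
  have hbot : Tendsto f atBot (𝓝 0) := h0 ▸ (hcont.tendsto _).comp
    ((tendsto_cdf_atBot μ).prodMk_nhds (tendsto_cdf_atBot ν))
  have htop : Tendsto f atTop (𝓝 1) := h1 ▸ (hcont.tendsto _).comp
    ((tendsto_cdf_atTop μ).prodMk_nhds (tendsto_cdf_atTop ν))
  obtain ⟨η, hη, hcdf⟩ := exists_cdfR_eq f hbot htop
  exact ⟨η, hη, fun x => by rw [hcdf, cdfR_eq_cdf μ, cdfR_eq_cdf ν]⟩

lemma exists_cdfR_eq_avg_mem_Mid {μ ν : Measure ℝ} (hμ : μ ∈ PR) (hν : ν ∈ PR) :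
    ∃ η ∈ Mid μ ν, ∀ x, cdfR η x = (cdfR μ x + cdfR ν x) / 2 := by
  have := hμ.1
  have := hν.1
  obtain ⟨η, hη, hcdf⟩ := exists_cdfR_eq_comp μ ν (Φ := fun p => (p.1 + p.2) / 2)
    (fun p q hpq => by dsimp only; linarith [hpq.1, hpq.2]) (by fun_prop) (by norm_num)
    (by norm_num)
  have hmem : ∀ x, cdfR η x ∈ uIcc (cdfR μ x) (cdfR ν x) := fun x => by
    rw [hcdf, mem_uIcc]
    rcases le_total (cdfR μ x) (cdfR ν x) with h | h
    · exact Or.inl ⟨by linarith, by linarith⟩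
    · exact Or.inr ⟨by linarith, by linarith⟩
  refine ⟨η, mem_Mid_of_cdfR_mem_uIcc hμ hν hmem ?_, hcdf⟩
  rw [dW1R, dW1R, ← integral_div]
  congr 1 with x
  rw [hcdf, show cdfR μ x - (cdfR μ x + cdfR ν x) / 2 = (cdfR μ x - cdfR ν x) / 2 by ring,
    abs_div, abs_two]

lemma exists_setIntegral_Iio_eq_half {g : ℝ → ℝ} (hg : Integrable g) (h : ∫ x, g x ≠ 0) :
    ∃ a, ∫ x in Iio a, g x = (∫ x, g x) / 2 := by
  set ψ : ℝ → ℝ := fun a => ∫ x in Iio a, g x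
  have hcont : Continuous ψ := by
    have hψ : ψ = fun a => ψ 0 + ∫ x in (0 : ℝ)..a, g x := funext fun a => by
      rw [← intervalIntegral.integral_Iio_sub_Iio' hg.integrableOn hg.integrableOn]
      ring
    rw [hψ]
    exact continuous_const.add (hg.continuous_primitive 0)
  have hbot : Tendsto ψ atBot (𝓝 0) := tendsto_integral_Iio_zero tendsto_id
  have htop : Tendsto ψ atTop (𝓝 (∫ x, g x)) :=
    (aecover_Iio tendsto_id).integral_tendsto_of_countably_generated hg
  rcases h.lt_or_gt with hneg | hpos
  · exact intermediate_value_univ₂_eventually₂ hcont continuous_const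
      (htop.eventually_le_const (by linarith)) (hbot.eventually_const_le (by linarith))
  · exact intermediate_value_univ₂_eventually₂ hcont continuous_const
      (hbot.eventually_le_const (by linarith)) (htop.eventually_const_le (by linarith))

open Classical in
def cdfSplice (μ ν : Measure ℝ) (S : Set ℝ) (x : ℝ) : ℝ :=
  if x ∈ S then min (cdfR μ x) (cdfR ν x) else max (cdfR μ x) (cdfR ν x)

lemma cdfSplice_mem_uIcc (μ ν : Measure ℝ) (S : Set ℝ) (x : ℝ) :
    cdfSplice μ ν S x ∈ uIcc (cdfR μ x) (cdfR ν x) := by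
  unfold cdfSplice
  split_ifs
  · exact ⟨le_rfl, min_le_max⟩
  · exact ⟨min_le_max, le_rfl⟩

lemma cdfSplice_eq_or_eq (μ ν : Measure ℝ) (S : Set ℝ) (x : ℝ) :
    cdfSplice μ ν S x = cdfR μ x ∨ cdfSplice μ ν S x = cdfR ν x := by
  unfold cdfSplice
  split_ifs
  · exact min_choice _ _
  · exact max_choice _ _

lemma cdfSplice_empty (μ ν : Measure ℝ) (x : ℝ) :
    cdfSplice μ ν ∅ x = max (cdfR μ x) (cdfR ν x) := by
  simp [cdfSplice]

lemma monotone_cdfSplice_Iio (μ ν : Measure ℝ) [IsProbabilityMeasure μ] [IsProbabilityMeasure ν]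
    (a : ℝ) : Monotone (cdfSplice μ ν (Iio a)) := fun x y hxy => by
  have hmin := min_le_min (monotone_cdfR μ hxy) (monotone_cdfR ν hxy)
  have hmax := max_le_max (monotone_cdfR μ hxy) (monotone_cdfR ν hxy)
  simp only [cdfSplice, mem_Iio]
  split_ifs with hx hy hy
  · exact hmin
  · exact hmin.trans min_le_max
  · exact absurd (hxy.trans_lt hy) hx
  · exact hmax

lemma continuousWithinAt_cdfSplice_Iio (μ ν : Measure ℝ) [IsProbabilityMeasure μ]
    [IsProbabilityMeasure ν] (a x : ℝ) :
    ContinuousWithinAt (cdfSplice μ ν (Iio a)) (Ici x) x := by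
  have hF : ContinuousWithinAt (cdfR μ) (Ici x) x := by
    rw [cdfR_eq_cdf]; exact (cdf μ).right_continuous x
  have hG : ContinuousWithinAt (cdfR ν) (Ici x) x := by
    rw [cdfR_eq_cdf]; exact (cdf ν).right_continuous x
  by_cases hx : x < a
  · refine (hF.inf hG).congr_of_eventuallyEq ?_ (by simp [cdfSplice, hx])
    filter_upwards [nhdsWithin_le_nhds (Iio_mem_nhds hx)] with y hy
    simp [cdfSplice, hy]
  · refine (hF.sup hG).congr_of_eventuallyEq ?_ (by simp [cdfSplice, hx])
    filter_upwards [self_mem_nhdsWithin] with y (hy : x ≤ y)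
    simp [cdfSplice, not_lt.2 ((not_lt.1 hx).trans hy)]

lemma exists_cdfR_eq_cdfSplice_Iio (μ ν : Measure ℝ) [IsProbabilityMeasure μ]
    [IsProbabilityMeasure ν] (a : ℝ) :
    ∃ η : Measure ℝ, IsProbabilityMeasure η ∧ cdfR η = cdfSplice μ ν (Iio a) := by
  let f : StieltjesFunction ℝ := ⟨cdfSplice μ ν (Iio a), monotone_cdfSplice_Iio μ ν a,
    continuousWithinAt_cdfSplice_Iio μ ν a⟩
  have hbot : Tendsto f atBot (𝓝 0) := by
    have h := (tendsto_cdf_atBot μ).min (tendsto_cdf_atBot ν)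
    rw [min_self] at h
    refine h.congr' ?_
    filter_upwards [eventually_lt_atBot a] with y hy
    simp [f, cdfSplice, hy, cdfR_eq_cdf]
  have htop : Tendsto f atTop (𝓝 1) := by
    have h := (tendsto_cdf_atTop μ).max (tendsto_cdf_atTop ν)
    rw [max_self] at h
    refine h.congr' ?_
    filter_upwards [eventually_ge_atTop a] with y hy
    simp [f, cdfSplice, not_lt.2 hy, cdfR_eq_cdf]
  exact exists_cdfR_eq f hbot htop

lemma abs_sub_cdfSplice (μ ν : Measure ℝ) (S : Set ℝ) (x : ℝ) :
    |cdfR μ x - cdfSplice μ ν S x|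
      = max (cdfR ν x - cdfR μ x) 0 + S.indicator (fun y => cdfR μ y - cdfR ν y) x := by
  unfold cdfSplice
  by_cases hx : x ∈ S <;> rcases le_total (cdfR μ x) (cdfR ν x) with h | h <;>
    simp [hx, h, abs_of_nonneg, abs_of_nonpos]

lemma dW1R_eq_of_cdfR_eq_cdfSplice {μ ν ξ : Measure ℝ} (hμ : μ ∈ PR) (hν : ν ∈ PR) {S : Set ℝ}
    (hS : MeasurableSet S) (hξ : ∀ x, cdfR ξ x = cdfSplice μ ν S x) :
    dW1R μ ξ = (∫ x, max (cdfR ν x - cdfR μ x) 0) + ∫ x in S, (cdfR μ x - cdfR ν x) := by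
  simp only [dW1R, hξ, abs_sub_cdfSplice]
  rw [integral_add (integrable_cdfR_sub hν hμ).pos_part
    ((integrable_cdfR_sub hμ hν).indicator hS), integral_indicator hS]

lemma dW1R_eq_half_of_cdfR_eq_cdfSplice {μ ν η₀ ξ : Measure ℝ} {S : Set ℝ}
    (h₀ : ∀ x, cdfR η₀ x = (cdfR μ x + cdfR ν x) / 2) (hξ : ∀ x, cdfR ξ x = cdfSplice μ ν S x) :
    dW1R η₀ ξ = dW1R μ ν / 2 := by
  rw [dW1R, dW1R, ← integral_div]
  congr 1 with x
  rw [h₀, hξ]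
  rcases cdfSplice_eq_or_eq μ ν S x with h | h <;> rw [h]
  · rw [show (cdfR μ x + cdfR ν x) / 2 - cdfR μ x = -((cdfR μ x - cdfR ν x) / 2) by ring,
      abs_neg, abs_div, abs_two]
  · rw [show (cdfR μ x + cdfR ν x) / 2 - cdfR ν x = (cdfR μ x - cdfR ν x) / 2 by ring,
      abs_div, abs_two]

lemma exists_cdfR_eq_cdfSplice_mem_Mid {μ ν : Measure ℝ} (hμ : μ ∈ PR) (hν : ν ∈ PR) :
    ∃ S : Set ℝ, ∃ ξ ∈ Mid μ ν, ∀ x, cdfR ξ x = cdfSplice μ ν S x := by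
  have := hμ.1
  have := hν.1
  obtain ⟨S, hS, ξ, hξ, hcdf, hhalf⟩ : ∃ S : Set ℝ, MeasurableSet S ∧ ∃ ξ : Measure ℝ,
      IsProbabilityMeasure ξ ∧ (∀ x, cdfR ξ x = cdfSplice μ ν S x) ∧
      ∫ x in S, (cdfR μ x - cdfR ν x) = (∫ x, (cdfR μ x - cdfR ν x)) / 2 := by
    by_cases hI : ∫ x, (cdfR μ x - cdfR ν x) = 0
    · obtain ⟨ξ, hξ, hcdf⟩ := exists_cdfR_eq_comp μ ν (Φ := fun p => max p.1 p.2)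
        (fun p q hpq => max_le_max hpq.1 hpq.2) (by fun_prop) (by norm_num) (by norm_num)
      exact ⟨∅, .empty, ξ, hξ, fun x => by rw [hcdf, cdfSplice_empty], by simp [hI]⟩
    · obtain ⟨a, ha⟩ := exists_setIntegral_Iio_eq_half (integrable_cdfR_sub hμ hν) hI
      obtain ⟨ξ, hξ, hcdf⟩ := exists_cdfR_eq_cdfSplice_Iio μ ν a
      exact ⟨Iio a, measurableSet_Iio, ξ, hξ, congrFun hcdf, ha⟩
  refine ⟨S, ξ, mem_Mid_of_cdfR_mem_uIcc hμ hν (fun x => hcdf x ▸ cdfSplice_mem_uIcc μ ν S x) ?_,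
    hcdf⟩
  rw [dW1R_eq_of_cdfR_eq_cdfSplice hμ hν hS hcdf, hhalf, dW1R_eq_two_mul_add hμ hν]
  ring

theorem midpoint_set_diameter_general (μ : Measure ℝ) (hμ : μ ∈ PR) (ν : Measure ℝ) (hν : ν ∈ PR) :
    ∃ r : ℝ, IsLUB {d : ℝ | ∃ η₁ ∈ Mid μ ν, ∃ η₂ ∈ Mid μ ν, d = dW1R η₁ η₂} r ∧
      dW1R μ ν / 2 ≤ r ∧ r ≤ dW1R μ ν := by
  obtain ⟨η, hη, hη_cdf⟩ := exists_cdfR_eq_avg_mem_Mid hμ hν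
  obtain ⟨S, ξ, hξ, hξ_cdf⟩ := exists_cdfR_eq_cdfSplice_mem_Mid hμ hν
  set D := {d : ℝ | ∃ η₁ ∈ Mid μ ν, ∃ η₂ ∈ Mid μ ν, d = dW1R η₁ η₂}
  have hmem : dW1R μ ν / 2 ∈ D :=
    ⟨η, hη, ξ, hξ, (dW1R_eq_half_of_cdfR_eq_cdfSplice hη_cdf hξ_cdf).symm⟩
  have hbound : dW1R μ ν ∈ upperBounds D := by
    rintro _ ⟨η₁, h₁, η₂, h₂, rfl⟩
    exact dW1R_le_of_mem_Mid hμ h₁ h₂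
  exact ⟨sSup D, isLUB_csSup ⟨_, hmem⟩ ⟨_, hbound⟩, le_csSup ⟨_, hbound⟩ hmem,
    csSup_le ⟨_, hmem⟩ hbound⟩

/-- For distinct `μ, ν ∈ W₁(ℝ)`, the diameter of the metric midpoint set lies between
`d(μ,ν)/2` and `d(μ,ν)`. -/
theorem midpoint_set_diameter (μ : Measure ℝ) (hμ : μ ∈ PR) (ν : Measure ℝ) (hν : ν ∈ PR)
    (hne : μ ≠ ν) :
    ∃ r : ℝ, IsLUB {d : ℝ | ∃ η₁ ∈ Mid μ ν, ∃ η₂ ∈ Mid μ ν, d = dW1R η₁ η₂} r ∧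
      dW1R μ ν / 2 ≤ r ∧ r ≤ dW1R μ ν :=
  midpoint_set_diameter_general μ hμ ν hν

end
end
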